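/- Let (G_i)_{i∈ω} be an inverse system of finite discrete groups with surjective bonding homomorphisms, with G_0 the trivial group, and set m_i = |G_i|/|G_{i-1}| for i ≥ 1 and m_0 = 1. Let G be the inverse limit of this system with its Haar probability measure μ_G. Then there is a homeomorphism ψ from G onto the product space ∏_{i∈ω} {1, 2, …, m_i} (with the product topology) that is measure preserving with respect to μ_G on G and the product measure ν on ∏_{i∈ω} {1, …, m_i} given by ν({k₀} × {k₁} × … × {k_i} × ∏_{j>i} {1,…,m_j}) = (1/m₀)·(1/m₁)·…·(1/m_i). -/

import Mathlib

open MeasureTheory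
open scoped ENNReal

/-- The inverse limit of an `ω`-indexed inverse system of groups, as a subgroup of the
product (threads compatible with the consecutive bonding homomorphisms). -/
def inverseLimit {G : ℕ → Type*} [∀ i, Group (G i)] (φ : ∀ i, G (i + 1) →* G i) :
    Subgroup (∀ i, G i) where
  carrier := {x | ∀ i, φ i (x (i + 1)) = x i}
  one_mem' := fun i => by simp
  mul_mem' := fun {a b} ha hb i => by simp [ha i, hb i]
  inv_mem' := fun {a} ha i => by simp [ha i]

/-- The sequence of relative cardinalities: `m 0 = 1`, `m (i+1) = |G (i+1)| / |G i|`. -/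
def mseq (G : ℕ → Type*) [∀ i, Fintype (G i)] : ℕ → ℕ
  | 0 => 1
  | (i + 1) => Fintype.card (G (i + 1)) / Fintype.card (G i)

namespace Stmt18

variable {G : ℕ → Type*} [∀ i, Group (G i)] [∀ i, Fintype (G i)]
  (φ : ∀ i, G (i + 1) →* G i) (hsurj : ∀ i, Function.Surjective (φ i))

set_option linter.unusedSectionVars false
include hsurj

lemma mem_iff (x : ∀ i, G i) : x ∈ inverseLimit φ ↔ ∀ i, φ i (x (i + 1)) = x i := Iff.rfl

noncomputable def sec (i : ℕ) (g : G i) : G (i + 1) := (hsurj i g).choose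

lemma sec_spec (i : ℕ) (g : G i) : φ i (sec φ hsurj i g) = g := (hsurj i g).choose_spec

lemma card_succ (i : ℕ) :
    Fintype.card (G (i + 1)) = Fintype.card (G i) * Nat.card (φ i).ker := by
  have h := Subgroup.card_eq_card_quotient_mul_card_subgroup (φ i).ker
  have h2 : Nat.card (G (i + 1) ⧸ (φ i).ker) = Nat.card (G i) :=
    Nat.card_congr (QuotientGroup.quotientKerEquivOfSurjective (φ i) (hsurj i)).toEquiv
  rw [h2] at h
  simpa [Nat.card_eq_fintype_card] using h

lemma mseq_succ (i : ℕ) : mseq G (i + 1) = Nat.card (φ i).ker := by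
  show Fintype.card (G (i + 1)) / Fintype.card (G i) = _
  rw [card_succ φ hsurj i, Nat.mul_div_cancel_left _ Fintype.card_pos]

lemma mseq_pos : ∀ i, 0 < mseq G i
  | 0 => Nat.one_pos
  | (i + 1) => by
      rw [mseq_succ φ hsurj i]
      exact Nat.card_pos

noncomputable def ee (i : ℕ) : (φ i).ker ≃ Fin (mseq G (i + 1)) :=
  Finite.equivFinOfCardEq (mseq_succ φ hsurj i).symm

noncomputable def thread (k : ∀ i, Fin (mseq G i)) : ∀ i, G i
  | 0 => 1
  | (i + 1) => sec φ hsurj i (thread k i) * ((ee φ hsurj i).symm (k (i + 1)) : G (i + 1))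

lemma thread_mem (k : ∀ i, Fin (mseq G i)) : thread φ hsurj k ∈ inverseLimit φ := by
  intro i
  have h := ((ee φ hsurj i).symm (k (i + 1))).2
  rw [MonoidHom.mem_ker] at h
  simp [thread, sec_spec, h]

lemma ker_mem (x : inverseLimit φ) (i : ℕ) :
    (sec φ hsurj i (x.1 i))⁻¹ * x.1 (i + 1) ∈ (φ i).ker := by
  rw [MonoidHom.mem_ker]
  have hx : φ i (x.1 (i + 1)) = x.1 i := x.2 i
  simp [sec_spec, hx]

noncomputable def psifun (x : inverseLimit φ) : ∀ i, Fin (mseq G i)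
  | 0 => ⟨0, mseq_pos φ hsurj 0⟩
  | (i + 1) => ee φ hsurj i ⟨(sec φ hsurj i (x.1 i))⁻¹ * x.1 (i + 1), ker_mem φ hsurj x i⟩

lemma fin0_subsingleton : Subsingleton (Fin (mseq G 0)) := by
  have : mseq G 0 = 1 := rfl
  rw [this]
  infer_instance

lemma psifun_thread (k : ∀ i, Fin (mseq G i)) :
    psifun φ hsurj ⟨thread φ hsurj k, thread_mem φ hsurj k⟩ = k := by
  funext i
  cases i with
  | zero =>
      haveI := fin0_subsingleton φ hsurj
      exact Subsingleton.elim _ _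
  | succ i =>
      show ee φ hsurj i ⟨(sec φ hsurj i (thread φ hsurj k i))⁻¹ * thread φ hsurj k (i + 1), _⟩
        = k (i + 1)
      have : (⟨(sec φ hsurj i (thread φ hsurj k i))⁻¹ * thread φ hsurj k (i + 1),
          ker_mem φ hsurj ⟨thread φ hsurj k, thread_mem φ hsurj k⟩ i⟩ : (φ i).ker)
          = (ee φ hsurj i).symm (k (i + 1)) := by
        apply Subtype.ext
        show (sec φ hsurj i (thread φ hsurj k i))⁻¹ * thread φ hsurj k (i + 1) = _
        rw [show thread φ hsurj k (i + 1)
          = sec φ hsurj i (thread φ hsurj k i) * ((ee φ hsurj i).symm (k (i + 1)) : G (i + 1))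
          from rfl]
        exact inv_mul_cancel_left _ _
      rw [this, Equiv.apply_symm_apply]

/-- going down a thread: values at level `n` determine values below `n`. -/
lemma down_aux {x y : ∀ i, G i} (hx : x ∈ inverseLimit φ) (hy : y ∈ inverseLimit φ) :
    ∀ d i, x (i + d) = y (i + d) → x i = y i := by
  intro d
  induction d with
  | zero => intro i h; exact h
  | succ d ih =>
      intro i h
      refine ih i ?_
      have hx' := hx (i + d)
      have hy' := hy (i + d)
      rw [← hx', ← hy']
      exact congrArg (φ (i + d)) h

lemma eq_below {x y : ∀ i, G i} (hx : x ∈ inverseLimit φ) (hy : y ∈ inverseLimit φ)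
    {n : ℕ} (h : x n = y n) : ∀ i ≤ n, x i = y i := by
  intro i hi
  obtain ⟨d, rfl⟩ := Nat.exists_eq_add_of_le hi
  exact down_aux φ hsurj hx hy d i h

lemma thread_congr {j k : ∀ i, Fin (mseq G i)} {n : ℕ} (h : ∀ i ≤ n, j i = k i) :
    ∀ i ≤ n, thread φ hsurj j i = thread φ hsurj k i := by
  intro i
  induction i with
  | zero => intro _; rfl
  | succ i ih =>
      intro hi
      show sec φ hsurj i (thread φ hsurj j i) * ((ee φ hsurj i).symm (j (i + 1)) : G (i + 1))
        = sec φ hsurj i (thread φ hsurj k i) * ((ee φ hsurj i).symm (k (i + 1)) : G (i + 1))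
      rw [ih (le_trans (Nat.le_succ i) hi), h (i + 1) hi]

lemma thread_inj_below {j k : ∀ i, Fin (mseq G i)} {n : ℕ}
    (h : ∀ i ≤ n, thread φ hsurj j i = thread φ hsurj k i) : ∀ i ≤ n, j i = k i := by
  intro i hi
  cases i with
  | zero =>
      haveI := fin0_subsingleton φ hsurj
      exact Subsingleton.elim _ _
  | succ i =>
      have h1 : thread φ hsurj j i = thread φ hsurj k i := h i (le_trans (Nat.le_succ i) hi)
      have h2 : sec φ hsurj i (thread φ hsurj j i) * ((ee φ hsurj i).symm (j (i + 1)) : G (i + 1))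
          = sec φ hsurj i (thread φ hsurj k i)
            * ((ee φ hsurj i).symm (k (i + 1)) : G (i + 1)) := h (i + 1) hi
      rw [h1] at h2
      have h3 : ((ee φ hsurj i).symm (j (i + 1)) : G (i + 1))
          = ((ee φ hsurj i).symm (k (i + 1)) : G (i + 1)) := mul_left_cancel h2
      exact (ee φ hsurj i).symm.injective (Subtype.ext h3)

variable (h0 : Fintype.card (G 0) = 1)
include h0

lemma subsingleton0 : Subsingleton (G 0) :=
  Fintype.card_le_one_iff_subsingleton.mp (le_of_eq h0)

lemma thread_psifun (x : inverseLimit φ) : thread φ hsurj (psifun φ hsurj x) = x.1 := by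
  funext i
  induction i with
  | zero =>
      haveI := subsingleton0 φ hsurj h0
      exact Subsingleton.elim _ _
  | succ i ih =>
      show sec φ hsurj i (thread φ hsurj (psifun φ hsurj x) i) *
        ((ee φ hsurj i).symm (psifun φ hsurj x (i + 1)) : G (i + 1)) = x.1 (i + 1)
      rw [ih]
      show sec φ hsurj i (x.1 i) *
        ((ee φ hsurj i).symm (ee φ hsurj i
          ⟨(sec φ hsurj i (x.1 i))⁻¹ * x.1 (i + 1), _⟩) : G (i + 1)) = _
      rw [Equiv.symm_apply_apply]
      exact mul_inv_cancel_left _ _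

lemma psifun_below_iff (x : inverseLimit φ) (k : ∀ i, Fin (mseq G i)) (n : ℕ) :
    (∀ i ≤ n, psifun φ hsurj x i = k i) ↔ x.1 n = thread φ hsurj k n := by
  constructor
  · intro h
    have := thread_congr φ hsurj h n (le_refl n)
    rwa [thread_psifun φ hsurj h0] at this
  · intro h
    have hb := eq_below φ hsurj x.2 (thread_mem φ hsurj k) h
    have hb' : ∀ i ≤ n, thread φ hsurj (psifun φ hsurj x) i = thread φ hsurj k i := by
      intro i hi
      rw [thread_psifun φ hsurj h0]
      exact hb i hi
    exact thread_inj_below φ hsurj hb'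

omit h0

lemma prod_mseq (n : ℕ) (h0 : Fintype.card (G 0) = 1) :
    ∏ i ∈ Finset.range (n + 1), mseq G i = Fintype.card (G n) := by
  induction n with
  | zero =>
      have : mseq G 0 = 1 := rfl
      simp [this, h0]
  | succ n ih =>
      rw [Finset.prod_range_succ, ih, mseq_succ φ hsurj n, ← Nat.card_eq_fintype_card,
        Nat.card_eq_fintype_card, ← card_succ φ hsurj n]

/-- surjectivity of the projection to level `n`. -/
lemma proj_surj (h0 : Fintype.card (G 0) = 1) (n : ℕ) :
    Function.Surjective (fun x : inverseLimit φ => x.1 n) := by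
  classical
  set ext : (∀ i : Fin (n + 1), Fin (mseq G (i : ℕ))) → (∀ i, Fin (mseq G i)) :=
    fun r i => if h : i < n + 1 then r ⟨i, h⟩ else ⟨0, mseq_pos φ hsurj i⟩ with hext
  set F : (∀ i : Fin (n + 1), Fin (mseq G (i : ℕ))) → G n :=
    fun r => thread φ hsurj (ext r) n with hF
  have hinj : Function.Injective F := by
    intro r r' hrr
    have h1 := eq_below φ hsurj (thread_mem φ hsurj (ext r)) (thread_mem φ hsurj (ext r')) hrr
    have h2 := thread_inj_below φ hsurj h1
    funext i
    have := h2 (i : ℕ) (Nat.lt_succ_iff.mp i.2)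
    simpa [hext, dif_pos i.2, Nat.lt_succ_iff.mp i.2] using this
  have hcard : Fintype.card (∀ i : Fin (n + 1), Fin (mseq G (i : ℕ))) = Fintype.card (G n) := by
    rw [Fintype.card_pi]
    simp only [Fintype.card_fin]
    rw [Fin.prod_univ_eq_prod_range (fun i => mseq G i) (n + 1)]
    exact prod_mseq φ hsurj n h0
  have hsurjF : Function.Surjective F :=
    ((Fintype.bijective_iff_injective_and_card F).mpr ⟨hinj, hcard⟩).2
  intro g
  obtain ⟨r, hr⟩ := hsurjF g
  exact ⟨⟨thread φ hsurj (ext r), thread_mem φ hsurj (ext r)⟩, hr⟩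

end Stmt18

open Stmt18 in
/-- The inverse limit of an inverse system of finite discrete groups
with surjective bonding maps and trivial `G 0`, equipped with its Haar probability
measure, is homeomorphic via a measure preserving homeomorphism to the product space
`∏_{i} {1, …, m_i}` with the product measure giving each cylinder
`{k₀} × ⋯ × {k_n} × ∏_{j>n} {1,…,m_j}` measure `∏_{i ≤ n} 1/m_i`. -/
theorem stmt_18 {G : ℕ → Type*} [∀ i, Group (G i)] [∀ i, Fintype (G i)]
    [∀ i, TopologicalSpace (G i)] [∀ i, DiscreteTopology (G i)]
    (φ : ∀ i, G (i + 1) →* G i)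
    (hsurj : ∀ i, Function.Surjective (φ i))
    (h0 : Fintype.card (G 0) = 1)
    [MeasurableSpace (inverseLimit φ)] [BorelSpace (inverseLimit φ)]
    (μ : Measure (inverseLimit φ)) [μ.IsHaarMeasure] [IsProbabilityMeasure μ] :
    ∃ (ν : Measure (∀ i, Fin (mseq G i)))
      (ψ : inverseLimit φ ≃ₜ (∀ i, Fin (mseq G i))),
      (∀ (n : ℕ) (k : ∀ i, Fin (mseq G i)),
        ν {x | ∀ i ≤ n, x i = k i} =
          ∏ i ∈ Finset.range (n + 1), ((mseq G i : ℝ≥0∞))⁻¹) ∧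
      MeasurePreserving ψ μ ν := by
  classical
  haveI : ∀ i, IsTopologicalGroup (G i) := fun i =>
    { toContinuousMul := inferInstance, toContinuousInv := inferInstance }
  -- continuity of psifun
  have cont_psi_coord : ∀ i, Continuous (fun x : inverseLimit φ => psifun φ hsurj x i) := by
    intro i
    cases i with
    | zero =>
        haveI := fin0_subsingleton φ hsurj
        have : (fun x : inverseLimit φ => psifun φ hsurj x 0)
            = fun _ => (⟨0, mseq_pos φ hsurj 0⟩ : Fin (mseq G 0)) :=
          funext fun _ => Subsingleton.elim _ _
        rw [this]; exact continuous_const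
    | succ i =>
        set d : G i × G (i + 1) → Fin (mseq G (i + 1)) := fun p =>
          if h : (sec φ hsurj i p.1)⁻¹ * p.2 ∈ (φ i).ker then ee φ hsurj i ⟨_, h⟩
          else ⟨0, mseq_pos φ hsurj (i + 1)⟩ with hd
        have heq : (fun x : inverseLimit φ => psifun φ hsurj x (i + 1))
            = d ∘ (fun x : inverseLimit φ => (x.1 i, x.1 (i + 1))) := by
          funext x
          show psifun φ hsurj x (i + 1) = d (x.1 i, x.1 (i + 1))
          rw [hd]
          simp only
          rw [dif_pos (ker_mem φ hsurj x i)]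
          rfl
        rw [heq]
        exact continuous_of_discreteTopology.comp
          (((continuous_apply i).comp continuous_subtype_val).prodMk
            ((continuous_apply (i + 1)).comp continuous_subtype_val))
  -- continuity of thread coordinates
  have cont_thread : ∀ n, Continuous (fun k : ∀ i, Fin (mseq G i) => thread φ hsurj k n) := by
    intro n
    induction n with
    | zero => exact continuous_const
    | succ n ih =>
        have heq : (fun k : ∀ i, Fin (mseq G i) => thread φ hsurj k (n + 1))
            = (fun p : G n × Fin (mseq G (n + 1)) =>
                sec φ hsurj n p.1 * ((ee φ hsurj n).symm p.2 : G (n + 1)))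
              ∘ (fun k => (thread φ hsurj k n, k (n + 1))) := rfl
        rw [heq]
        exact continuous_of_discreteTopology.comp (ih.prodMk (continuous_apply (n + 1)))
  -- the homeomorphism
  let ψ : inverseLimit φ ≃ₜ (∀ i, Fin (mseq G i)) :=
    { toFun := psifun φ hsurj
      invFun := fun k => ⟨thread φ hsurj k, thread_mem φ hsurj k⟩
      left_inv := by
        intro x
        apply Subtype.ext
        exact thread_psifun φ hsurj h0 x
      right_inv := fun k => psifun_thread φ hsurj k
      continuous_toFun := continuous_pi cont_psi_coord
      continuous_invFun := Continuous.subtype_mk (continuous_pi cont_thread) _ }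
  -- the fibers of the projections all have the same measure
  have fiber_open : ∀ (n : ℕ) (g : G n), IsOpen {x : inverseLimit φ | x.1 n = g} := by
    intro n g
    have : {x : inverseLimit φ | x.1 n = g}
        = (fun x : inverseLimit φ => x.1 n) ⁻¹' {g} := rfl
    rw [this]
    exact (isOpen_discrete {g}).preimage ((continuous_apply n).comp continuous_subtype_val)
  have fiber_meas : ∀ (n : ℕ) (g : G n), μ {x : inverseLimit φ | x.1 n = g}
      = μ {x : inverseLimit φ | x.1 n = 1} := by
    intro n g
    obtain ⟨x₀, hx₀⟩ := proj_surj φ hsurj h0 n g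
    have hx₀' : (x₀ : ∀ i, G i) n = g := hx₀
    have hset : {x : inverseLimit φ | x.1 n = g}
        = (fun x : inverseLimit φ => x₀⁻¹ * x) ⁻¹' {x : inverseLimit φ | x.1 n = 1} := by
      ext x
      simp only [Set.mem_setOf_eq, Set.mem_preimage]
      have : (↑(x₀⁻¹ * x) : ∀ i, G i) n = (x₀.1 n)⁻¹ * x.1 n := rfl
      rw [this, inv_mul_eq_one, hx₀']
      exact eq_comm
    rw [hset]
    exact measure_preimage_mul μ x₀⁻¹ _
  have fiber_val : ∀ n : ℕ, μ {x : inverseLimit φ | x.1 n = 1}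
      = ((Fintype.card (G n) : ℝ≥0∞))⁻¹ := by
    intro n
    have hunion : (Set.univ : Set (inverseLimit φ))
        = ⋃ g : G n, {x : inverseLimit φ | x.1 n = g} := by
      ext x; simp
    have hdisj : Pairwise (Function.onFun Disjoint
        (fun g : G n => {x : inverseLimit φ | x.1 n = g})) := by
      intro g g' hgg'
      apply Set.disjoint_left.mpr
      intro x hx hx'
      exact hgg' (hx ▸ hx')
    have hmeas : ∀ g : G n, MeasurableSet {x : inverseLimit φ | x.1 n = g} :=
      fun g => (fiber_open n g).measurableSet
    have h1 : (1 : ℝ≥0∞) = ∑' g : G n, μ {x : inverseLimit φ | x.1 n = g} := by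
      rw [← measure_iUnion hdisj hmeas, ← hunion, measure_univ]
    rw [tsum_fintype] at h1
    simp only [fiber_meas n] at h1
    rw [Finset.sum_const, Finset.card_univ, nsmul_eq_mul] at h1
    have hc0 : ((Fintype.card (G n) : ℝ≥0∞)) ≠ 0 := Nat.cast_ne_zero.mpr Fintype.card_ne_zero
    have hct : ((Fintype.card (G n) : ℝ≥0∞)) ≠ ⊤ := ENNReal.natCast_ne_top _
    calc μ {x : inverseLimit φ | x.1 n = 1}
        = ((Fintype.card (G n) : ℝ≥0∞))⁻¹
          * ((Fintype.card (G n) : ℝ≥0∞) * μ {x : inverseLimit φ | x.1 n = 1}) := by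
          rw [← mul_assoc, ENNReal.inv_mul_cancel hc0 hct, one_mul]
      _ = ((Fintype.card (G n) : ℝ≥0∞))⁻¹ := by rw [← h1, mul_one]
  refine ⟨μ.map ψ, ψ, ?_, ?_⟩
  · intro n k
    have hS : MeasurableSet {x : ∀ i, Fin (mseq G i) | ∀ i ≤ n, x i = k i} := by
      have : {x : ∀ i, Fin (mseq G i) | ∀ i ≤ n, x i = k i}
          = ⋂ i, ⋂ (_ : i ≤ n), (fun x : ∀ i, Fin (mseq G i) => x i) ⁻¹' {k i} := by
        ext x; simp [Set.mem_iInter]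
      rw [this]
      exact MeasurableSet.iInter fun i => MeasurableSet.iInter fun _ =>
        (measurable_pi_apply i) (measurableSet_singleton _)
    rw [Measure.map_apply ψ.continuous.measurable hS]
    have hpre : (⇑ψ) ⁻¹' {x : ∀ i, Fin (mseq G i) | ∀ i ≤ n, x i = k i}
        = {x : inverseLimit φ | x.1 n = thread φ hsurj k n} := by
      ext x
      simp only [Set.mem_preimage, Set.mem_setOf_eq]
      exact psifun_below_iff φ hsurj h0 x k n
    rw [hpre, fiber_meas n _, fiber_val n, ← prod_mseq φ hsurj n h0, Nat.cast_prod,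
      ENNReal.prod_inv_distrib]
    intro i _ j _ _
    exact Or.inl (Nat.cast_ne_zero.mpr (mseq_pos φ hsurj i).ne')
  · exact ⟨ψ.continuous.measurable, rfl⟩
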